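/- arXiv:1612.08193 — 3 statements merged into one kernel-verified Lean document; each statement's English description precedes it below -/
import Mathlib

section
/- Every compact metric flow embeds equivariantly into the shift flow on C(ℝ, [0,1]^ℕ): if φ is a flow on a compact metric space X, then there exists a map F : X → C(ℝ, ℝ^ℕ) that is a homeomorphism onto its image, such that F(x)(t) ∈ [0,1]^ℕ for all x ∈ X and t ∈ ℝ, and F(φ(r, x)) = τ_r(F(x)) for all r ∈ ℝ and x ∈ X. -/
open MeasureTheory Topology

/-- The shift `τ_r` on the space `C(ℝ, E)` of continuous maps (compact-open topology):
`(τ_r f)(t) = f (t + r)`. -/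
noncomputable def tau {E : Type*} [TopologicalSpace E] (r : ℝ) (f : C(ℝ, E)) : C(ℝ, E) :=
  f.comp ⟨fun t => t + r, continuous_add_right r⟩

/-- Every compact metric flow embeds equivariantly into the shift flow on `C(ℝ, [0,1]^ℕ)`:
there is a map `F : X → C(ℝ, ℝ^ℕ)` which is a homeomorphism onto its image, takes values
in `[0,1]^ℕ`, and satisfies `F (φ (r, x)) = τ_r (F x)`. -/
theorem compact_flow_embeds_in_bebutov_product {X : Type*} [MetricSpace X] [CompactSpace X]
    (φ : ℝ × X → X) (hφ : Continuous φ)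
    (h0 : ∀ x, φ (0, x) = x)
    (hadd : ∀ (s t : ℝ) (x : X), φ (s + t, x) = φ (s, φ (t, x))) :
    ∃ F : X → C(ℝ, ℕ → ℝ),
      IsEmbedding F ∧
      (∀ (x : X) (t : ℝ) (i : ℕ), F x t i ∈ Set.Icc (0 : ℝ) 1) ∧
      (∀ (r : ℝ) (x : X), F (φ (r, x)) = tau r (F x)) := by
  rcases isEmpty_or_nonempty X with hX | hX
  · refine ⟨fun x => isEmptyElim x, ⟨⟨?_⟩, fun x => isEmptyElim x⟩,
      fun x => isEmptyElim x, fun r x => isEmptyElim x⟩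
    · ext s
      simp only [isOpen_induced_iff]
      constructor
      · intro _; exact ⟨Set.univ, isOpen_univ, by ext x; exact isEmptyElim x⟩
      · intro _; exact (Set.eq_empty_of_isEmpty s) ▸ isOpen_empty
  · obtain ⟨u, hu⟩ := TopologicalSpace.exists_dense_seq X
    set g : ℕ → X → ℝ := fun n x => min (dist x (u n)) 1 with hg
    have hgc : ∀ n, Continuous (g n) := fun n =>
      (continuous_id.dist continuous_const).min continuous_const
    have hsep : ∀ x y : X, (∀ n, g n x = g n y) → x = y := by
      intro x y h
      refine eq_of_forall_dist_le fun ε hε => ?_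
      obtain ⟨n, hn⟩ := hu.exists_dist_lt x (lt_min (half_pos hε) one_half_pos)
      have h1 : g n x = dist x (u n) :=
        min_eq_left (le_of_lt (lt_of_lt_of_le hn ((min_le_right _ _).trans (by norm_num))))
      have hx1 : dist x (u n) < 1 :=
        lt_of_lt_of_le hn ((min_le_right _ _).trans (by norm_num))
      have h2 : dist y (u n) < 1 := by
        by_contra hc
        push_neg at hc
        have : g n y = 1 := min_eq_right hc
        rw [← h n, h1] at this
        linarith
      have h3 : dist y (u n) = dist x (u n) := by
        have := h n
        rw [h1, show g n y = dist y (u n) from min_eq_left h2.le] at this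
        exact this.symm
      calc dist x y ≤ dist x (u n) + dist (u n) y := dist_triangle _ _ _
        _ = dist x (u n) + dist y (u n) := by rw [dist_comm (u n) y]
        _ = dist x (u n) + dist x (u n) := by rw [h3]
        _ ≤ ε := by
          have hn' : dist x (u n) < ε / 2 := lt_of_lt_of_le hn (min_le_left _ _)
          linarith
    set G : C(X × ℝ, ℕ → ℝ) :=
      ⟨fun p i => g i (φ (p.2, p.1)), by
        apply continuous_pi
        intro i
        exact (hgc i).comp (hφ.comp (continuous_snd.prodMk continuous_fst))⟩ with hG
    set F : X → C(ℝ, ℕ → ℝ) := fun x => G.curry x with hF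
    have hFcont : Continuous F := G.curry.continuous
    have hFinj : Function.Injective F := by
      intro x y h
      apply hsep
      intro n
      have := congrFun (congrArg (fun f : C(ℝ, ℕ → ℝ) => f 0) h) n
      simpa [hF, hG, h0] using this
    refine ⟨F, (hFcont.isClosedEmbedding hFinj).isEmbedding, ?_, ?_⟩
    · intro x t i
      constructor
      · exact le_min dist_nonneg zero_le_one
      · exact min_le_right _ _
    · intro r x
      ext t i
      simp only [hF, hG, tau, ContinuousMap.curry_apply, ContinuousMap.comp_apply,
        ContinuousMap.coe_mk, ContinuousMap.curry_apply]
      rw [← hadd]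
end

section
/- Let φ be a flow on a compact metric space X and let ι : X → [0,1]^ℕ be a continuous injective map. Then the map F : X → C(ℝ, ℝ^ℕ) defined by F(x) = (t ↦ ι(φ(t, x))) is a homeomorphism onto its image and satisfies F(φ(r, x)) = τ_r(F(x)) for all r ∈ ℝ and x ∈ X. -/
open MeasureTheory Topology

/-- Let `φ` be a flow on a compact metric space `X` and `ι : X → [0,1]^ℕ` continuous and
injective. Then `F : X → C(ℝ, ℝ^ℕ)`, `F x = (t ↦ ι (φ (t, x)))`, is a homeomorphism onto
its image and is equivariant: `F (φ (r, x)) = τ_r (F x)`. -/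
theorem orbit_map_is_equivariant_embedding {X : Type*} [MetricSpace X] [CompactSpace X]
    (φ : ℝ × X → X) (hφ : Continuous φ)
    (h0 : ∀ x, φ (0, x) = x)
    (hadd : ∀ (s t : ℝ) (x : X), φ (s + t, x) = φ (s, φ (t, x)))
    (ι : X → ℕ → ℝ) (hι : Continuous ι) (hinj : Function.Injective ι)
    (hval : ∀ (x : X) (i : ℕ), ι x i ∈ Set.Icc (0 : ℝ) 1) :
    ∃ F : X → C(ℝ, ℕ → ℝ),
      (∀ (x : X) (t : ℝ), F x t = ι (φ (t, x))) ∧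
      IsEmbedding F ∧
      (∀ (r : ℝ) (x : X), F (φ (r, x)) = tau r (F x)) := by
  let G : C(X, C(ℝ, ℕ → ℝ)) :=
    ContinuousMap.curry ⟨fun p => ι (φ (p.2, p.1)),
      hι.comp (hφ.comp (continuous_snd.prodMk continuous_fst))⟩
  refine ⟨fun x => G x, fun x t => rfl, ?_, ?_⟩
  · have hGinj : Function.Injective (fun x => G x) := by
      intro x y h
      have := congrArg (fun f : C(ℝ, ℕ → ℝ) => f 0) h
      simp only [h0] at this
      have h2 : ι (φ (0, x)) = ι (φ (0, y)) := this
      rw [h0, h0] at h2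
      exact hinj h2
    exact (G.continuous.isClosedEmbedding hGinj).isEmbedding
  · intro r x
    refine ContinuousMap.ext fun t => ?_
    show ι (φ (t, φ (r, x))) = ι (φ (t + r, x))
    rw [hadd]
end

section
/- Convolution with the n-th Fejér kernel band-limits to [-n, n]: if h : ℝ → ℝ is continuous with |h(x)| ≤ 1 for all x, then for every positive integer n, the bounded continuous function h ∗ φ_n has distributional Fourier support contained in [-n, n]; that is, for every Schwartz function g : ℝ → ℂ whose support is disjoint from [-n, n], ∫_ℝ (h ∗ φ_n)(x) · (𝓕g)(x) dx = 0, where 𝓕g(ξ) = ∫_ℝ e^{-2πi x ξ} g(x) dx. -/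
open MeasureTheory Real

/-- The Fejér kernel `φ_n(x) = sin²(πnx)/(nπ²x²)` (with `φ_n(0) = n`). -/
noncomputable def fejer (n : ℕ) (x : ℝ) : ℝ :=
  if x = 0 then (n : ℝ)
  else (Real.sin (Real.pi * n * x)) ^ 2 / (n * Real.pi ^ 2 * x ^ 2)

/-- The Fourier transform `𝓕g(ξ) = ∫_ℝ e^{-2πixξ} g(x) dx`. -/
noncomputable def ftransform (g : ℝ → ℂ) (ξ : ℝ) : ℂ :=
  ∫ x : ℝ, Complex.exp ((-2) * Real.pi * Complex.I * x * ξ) * g x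

/-!
`φ_n` is the Fourier transform of the triangle function `Λ_n(ξ) = max 0 (1 - |ξ|/n)`, which is
supported in `[-n, n]`, so `φ_n(· - t)` is the Fourier transform of the modulated triangle
`e^{2πitξ} Λ_n(ξ)`. After Fubini, `∫ (h ∗ φ_n) 𝓕g = ∫ h(t) ∫ φ_n(x - t) 𝓕g(x) dx dt`, and moving the
Fourier transform across the inner pairing turns it into `∫ e^{2πitξ} Λ_n(ξ) g(-ξ) dξ`, whose
integrand vanishes because `g` vanishes on `[-n, n]`.
-/

open FourierTransform

section Fourier

variable {V E : Type*} [NormedAddCommGroup V] [InnerProductSpace ℝ V] [FiniteDimensional ℝ V]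
  [MeasurableSpace V] [BorelSpace V] [NormedAddCommGroup E] [NormedSpace ℂ E]

open scoped RealInnerProductSpace

theorem Real.fourier_fourierChar_smul (f : V → E) (v₀ w : V) :
    𝓕 (fun v ↦ 𝐞 ⟪v, v₀⟫ • f v) w = 𝓕 f (w - v₀) := by
  simp only [fourier_eq, smul_smul, ← AddChar.map_add_eq_mul, inner_sub_right, neg_sub,
    neg_add_eq_sub]

theorem SchwartzMap.fourier_fourier_apply [CompleteSpace E] (g : SchwartzMap V E) (v : V) :
    𝓕 (𝓕 (g : V → E)) v = g (-v) := by
  rw [← neg_neg v, ← fourierInv_eq_fourier_neg, neg_neg, ← SchwartzMap.fourier_coe,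
    ← SchwartzMap.fourierInv_coe, FourierTransform.fourierInv_fourier_eq]

theorem integral_fourier_mul_fourier_schwartz {f : V → ℂ} (hf : Integrable f)
    (g : SchwartzMap V ℂ) :
    ∫ w, 𝓕 f w * 𝓕 (g : V → ℂ) w = ∫ v, f v * g (-v) := by
  simp_rw [← SchwartzMap.fourier_fourier_apply g]
  simpa using! VectorFourier.integral_bilin_fourierIntegral_eq_flip (ContinuousLinearMap.mul ℂ ℂ)
    (L := innerₗ V) continuous_fourierChar continuous_inner hf ((𝓕 g).integrable (μ := volume))

end Fourier

theorem ftransform_eq_fourier (g : ℝ → ℂ) : ftransform g = 𝓕 g := by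
  ext ξ
  rw [ftransform, Real.fourier_real_eq_integral_exp_smul]
  congr with x
  rw [smul_eq_mul]
  push_cast
  ring_nf

theorem intervalIntegral.integral_symmetric_eq_integral_add_comp_neg {E : Type*}
    [NormedAddCommGroup E] [NormedSpace ℝ E] {f : ℝ → E} (hf : Continuous f) (a : ℝ) :
    ∫ x in -a..a, f x = ∫ x in 0..a, (f x + f (-x)) := by
  rw [intervalIntegral.integral_add (hf.intervalIntegrable _ _) (g := fun x ↦ f (-x))
    ((hf.comp continuous_neg).intervalIntegrable _ _), intervalIntegral.integral_comp_neg,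
    neg_zero, add_comm, intervalIntegral.integral_add_adjacent_intervals
    (hf.intervalIntegrable _ _) (hf.intervalIntegrable _ _)]

theorem integral_one_sub_div_mul_cexp {a : ℝ} (ha : a ≠ 0) {c : ℂ} (hc : c ≠ 0) :
    ∫ ξ in (0 : ℝ)..a, (1 - ξ / a) * Complex.exp (c * ξ) =
      (Complex.exp (c * a) - 1 - c * a) / (a * c ^ 2) := by
  have haC : (a : ℂ) ≠ 0 := Complex.ofReal_ne_zero.2 ha
  have hderiv (ξ : ℝ) : HasDerivAt
      (fun ξ : ℝ ↦ ((1 - ξ / a) / c + 1 / (a * c ^ 2)) * Complex.exp (c * ξ))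
      ((1 - ξ / a) * Complex.exp (c * ξ)) ξ := by
    have hlin : HasDerivAt (fun ξ : ℝ ↦ (ξ : ℂ)) 1 ξ := Complex.ofRealCLM.hasDerivAt
    refine ((((hlin.div_const (a : ℂ)).const_sub 1).div_const c).add_const (1 / (a * c ^ 2))
      |>.mul (hlin.const_mul c).cexp).congr_deriv ?_
    field_simp
    ring
  rw [intervalIntegral.integral_eq_sub_of_hasDerivAt (fun ξ _ ↦ hderiv ξ)
    (by apply Continuous.intervalIntegrable; fun_prop)]
  field_simp
  simp
  ring

theorem integral_one_sub_div (a : ℝ) : ∫ ξ in (0 : ℝ)..a, (1 - ξ / a : ℂ) = a / 2 := by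
  rw [intervalIntegral.integral_sub intervalIntegrable_const
    (by apply Continuous.intervalIntegrable; fun_prop), intervalIntegral.integral_div,
    intervalIntegral.integral_ofReal, integral_id, intervalIntegral.integral_const]
  simp only [sub_zero, Complex.real_smul, mul_one, zero_pow two_ne_zero]
  push_cast
  field_simp
  ring

noncomputable def triangle (n : ℕ) (ξ : ℝ) : ℝ := max 0 (1 - |ξ| / n)

theorem continuous_triangle (n : ℕ) : Continuous (triangle n) := by
  unfold triangle
  fun_prop

section Triangle

variable {n : ℕ}

theorem triangle_of_abs_le {ξ : ℝ} (h : |ξ| ≤ n) : triangle n ξ = 1 - |ξ| / n :=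
  max_eq_right (sub_nonneg.2 (div_le_one_of_le₀ h n.cast_nonneg))

theorem triangle_of_le_abs (hn : 0 < n) {ξ : ℝ} (h : n ≤ |ξ|) : triangle n ξ = 0 :=
  max_eq_left (sub_nonpos.2 ((one_le_div (by positivity)).2 h))

theorem triangle_of_notMem_Ioc (hn : 0 < n) {ξ : ℝ} (h : ξ ∉ Set.Ioc (-(n : ℝ)) n) :
    triangle n ξ = 0 := by
  refine triangle_of_le_abs hn ?_
  rw [Set.mem_Ioc, not_and_or, not_lt, not_le] at h
  rcases h with h | h
  · exact le_abs.2 (.inr (by linarith))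
  · exact le_abs.2 (.inl h.le)

theorem integrable_triangle (hn : 0 < n) : Integrable (triangle n) := by
  refine (continuous_triangle n).integrable_of_hasCompactSupport <|
    HasCompactSupport.intro (isCompact_Icc (a := -(n : ℝ)) (b := n)) fun ξ hξ ↦ ?_
  rw [Set.mem_Icc, ← abs_le, not_le] at hξ
  exact triangle_of_le_abs hn hξ.le

theorem intervalIntegral_triangle_mul_cexp_eq (c : ℂ) :
    ∫ ξ in (-(n : ℝ))..n, (triangle n ξ : ℂ) * Complex.exp (c * ξ) =
      (∫ ξ in (0 : ℝ)..n, (1 - ξ / (n : ℝ)) * Complex.exp (c * ξ)) +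
        ∫ ξ in (0 : ℝ)..n, (1 - ξ / (n : ℝ)) * Complex.exp (-c * ξ) := by
  rw [intervalIntegral.integral_symmetric_eq_integral_add_comp_neg
    (by have := continuous_triangle n; fun_prop), ← intervalIntegral.integral_add
    (by apply Continuous.intervalIntegrable; fun_prop)
    (by apply Continuous.intervalIntegrable; fun_prop)]
  refine intervalIntegral.integral_congr fun ξ hξ ↦ ?_
  rw [Set.uIcc_of_le n.cast_nonneg] at hξ
  have hξn : |ξ| ≤ n := by rw [abs_of_nonneg hξ.1]; exact hξ.2
  simp only [triangle_of_abs_le hξn, triangle_of_abs_le ((abs_neg ξ).symm ▸ hξn), abs_neg,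
    abs_of_nonneg hξ.1, Complex.ofReal_neg, Complex.ofReal_sub, Complex.ofReal_one,
    Complex.ofReal_div, mul_neg, neg_mul]

theorem fourier_triangle_eq_intervalIntegral (hn : 0 < n) (x : ℝ) :
    𝓕 (fun ξ ↦ (triangle n ξ : ℂ)) x =
      ∫ ξ in (-(n : ℝ))..n, (triangle n ξ : ℂ) * Complex.exp (-2 * π * Complex.I * x * ξ) := by
  rw [fourier_real_eq_integral_exp_smul, intervalIntegral.integral_of_le (by simp),
    setIntegral_eq_integral_of_forall_compl_eq_zero fun ξ hξ ↦ by
      rw [triangle_of_notMem_Ioc hn hξ, Complex.ofReal_zero, zero_mul]]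
  congr with ξ
  rw [smul_eq_mul, mul_comm]
  push_cast
  ring_nf

theorem fourier_triangle (hn : 0 < n) (x : ℝ) :
    𝓕 (fun ξ ↦ (triangle n ξ : ℂ)) x = fejer n x := by
  rw [fourier_triangle_eq_intervalIntegral hn, intervalIntegral_triangle_mul_cexp_eq]
  set c : ℂ := -2 * π * Complex.I * x
  rcases eq_or_ne x 0 with rfl | hx
  · have hc : c = 0 := by simp [c]
    simp only [hc, zero_mul, neg_zero, Complex.exp_zero, mul_one]
    rw [integral_one_sub_div, fejer, if_pos rfl]
    push_cast
    ring
  have hn' : (n : ℝ) ≠ 0 := by positivity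
  have hc : c ≠ 0 := by simp [c, hx, pi_ne_zero]
  rw [integral_one_sub_div_mul_cexp hn' hc, integral_one_sub_div_mul_cexp hn' (neg_ne_zero.2 hc),
    fejer, if_neg hx]
  set θ : ℂ := π * n * x
  have hexp : Complex.exp (c * n) + Complex.exp (-c * n) = 2 - 4 * Complex.sin θ ^ 2 := by
    rw [show c * n = -(2 * θ) * Complex.I by simp only [c, θ]; ring,
      show -c * n = (2 * θ) * Complex.I by simp only [c, θ]; ring]
    linear_combination -(Complex.two_cos (2 * θ)) + 2 * Complex.cos_two_mul' θ +
      2 * Complex.cos_sq' θ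
  have hc2 : c ^ 2 = -4 * π ^ 2 * x ^ 2 := by
    simp only [c]
    linear_combination (4 * π ^ 2 * x ^ 2) * Complex.I_sq
  have hπ : (π : ℂ) ≠ 0 := by exact_mod_cast pi_ne_zero
  have hx' : (x : ℂ) ≠ 0 := by exact_mod_cast hx
  rw [neg_sq, hc2, ← add_div]
  push_cast
  rw [div_eq_div_iff (by simp [hπ, hx', hn.ne']) (by simp [hπ, hx', hn.ne'])]
  linear_combination ((n : ℂ) * π ^ 2 * x ^ 2) * hexp

end Triangle

theorem fejer_nonneg (n : ℕ) (x : ℝ) : 0 ≤ fejer n x := by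
  unfold fejer
  split_ifs <;> positivity

section Fejer

variable {n : ℕ}

theorem fejer_le (hn : 0 < n) (x : ℝ) : fejer n x ≤ n := by
  unfold fejer
  split_ifs with hx
  · exact le_rfl
  rw [div_le_iff₀ (by positivity)]
  calc Real.sin (π * n * x) ^ 2 ≤ (π * n * x) ^ 2 := sin_sq_le_sq
    _ = n * (n * π ^ 2 * x ^ 2) := by ring

theorem sq_mul_fejer_le (hn : 0 < n) (x : ℝ) : x ^ 2 * fejer n x ≤ 1 := by
  unfold fejer
  split_ifs with hx
  · simp [hx]
  have hnπ : (1 : ℝ) ≤ n * π ^ 2 := by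
    have : (1 : ℝ) ≤ n := by exact_mod_cast hn
    nlinarith [pi_gt_three]
  rw [← mul_div_assoc, div_le_one (by positivity)]
  calc x ^ 2 * Real.sin (π * n * x) ^ 2 ≤ x ^ 2 * 1 := by gcongr; exact sin_sq_le_one _
    _ ≤ x ^ 2 * (n * π ^ 2) := by gcongr
    _ = n * π ^ 2 * x ^ 2 := by ring

theorem continuous_fejer (hn : 0 < n) : Continuous (fejer n) := by
  have h : Continuous (𝓕 (fun ξ ↦ (triangle n ξ : ℂ))) :=
    VectorFourier.fourierIntegral_continuous continuous_fourierChar (by fun_prop)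
      (integrable_triangle hn).ofReal
  simp only [funext (fourier_triangle hn)] at h
  simpa [Function.comp_def] using Complex.continuous_re.comp h

theorem integrable_fejer (hn : 0 < n) : Integrable (fejer n) := by
  refine (integrable_inv_one_add_sq.const_mul (n + 1)).mono'
    (continuous_fejer hn).aestronglyMeasurable (.of_forall fun x ↦ ?_)
  rw [norm_of_nonneg (fejer_nonneg n x), ← div_eq_mul_inv, le_div_iff₀ (by positivity)]
  linarith [fejer_le hn x, sq_mul_fejer_le hn x]

end Fejer

section Convolution

variable {G : Type*} [AddCommGroup G] [MeasurableSpace G] [MeasurableAdd₂ G] [MeasurableNeg G]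
  {μ : Measure G} [SFinite μ] [μ.IsAddLeftInvariant] [μ.IsNegInvariant]

theorem integral_convolution_mul_eq_integral_mul_integral_comp_sub {h k F : G → ℂ} {C : ℝ}
    (hh : Measurable h) (hC : ∀ x, ‖h x‖ ≤ C) (hk : Integrable k μ) (hF : Integrable F μ) :
    ∫ x, (∫ t, h (x - t) * k t ∂μ) * F x ∂μ = ∫ t, h t * ∫ x, k (x - t) * F x ∂μ ∂μ := by
  have hint : Integrable (fun p : G × G ↦ h p.2 * (k (p.1 - p.2) * F p.1)) (μ.prod μ) := by
    have hprod : Integrable (fun p : G × G ↦ h (p.2 + p.1) * (k (-p.2) * F p.1)) (μ.prod μ) := by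
      refine Integrable.bdd_mul (c := C) ?_ ?_ (.of_forall fun p ↦ hC _)
      · simpa [mul_comm] using hF.mul_prod hk.comp_neg
      · exact (hh.comp (measurable_snd.add measurable_fst)).aestronglyMeasurable
    -- `(x, t) ↦ (x, t - x)` carries this integrand, dominated by a product, to ours.
    have := (measurePreserving_prod_sub μ μ).integrable_comp hprod.aestronglyMeasurable
    simpa [Function.comp_def] using this.2 hprod
  calc ∫ x, (∫ t, h (x - t) * k t ∂μ) * F x ∂μ
      = ∫ x, ∫ t, h t * (k (x - t) * F x) ∂μ ∂μ := by
        congr with x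
        rw [← integral_mul_const, ← integral_sub_left_eq_self _ μ x]
        simp only [sub_sub_cancel, mul_assoc]
    _ = ∫ t, ∫ x, h t * (k (x - t) * F x) ∂μ ∂μ := integral_integral_swap hint
    _ = ∫ t, h t * ∫ x, k (x - t) * F x ∂μ ∂μ := by simp only [integral_const_mul]

end Convolution

theorem integral_fejer_sub_mul_fourier_eq_zero {n : ℕ} (hn : 0 < n) (g : SchwartzMap ℝ ℂ)
    (hg : ∀ ξ ∈ Set.Icc (-(n : ℝ)) n, g ξ = 0) (t : ℝ) :
    ∫ x, (fejer n (x - t) : ℂ) * 𝓕 (g : ℝ → ℂ) x = 0 := by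
  have hΛ : Integrable (fun ξ : ℝ ↦ 𝐞 (inner ℝ ξ t) • (triangle n ξ : ℂ)) := by
    simpa using (Real.fourierIntegral_convergent_iff (-t)).2 (integrable_triangle hn).ofReal
  have hvanish (ξ : ℝ) : (triangle n ξ : ℂ) * g (-ξ) = 0 := by
    rcases le_or_gt |ξ| n with h | h
    · rw [hg (-ξ) (abs_le.1 (by rwa [abs_neg])), mul_zero]
    · rw [triangle_of_le_abs hn h.le, Complex.ofReal_zero, zero_mul]
  simp_rw [← fourier_triangle hn, ← Real.fourier_fourierChar_smul,
    integral_fourier_mul_fourier_schwartz hΛ, smul_mul_assoc, hvanish, smul_zero, integral_zero]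

/-- Convolution with `φ_n` band-limits to `[-n, n]`: for continuous `h` with `|h| ≤ 1`,
the bounded continuous function `h ∗ φ_n` has distributional Fourier support contained in
`[-n, n]`: for every Schwartz function `g` whose support is disjoint from `[-n, n]`,
`∫ (h ∗ φ_n)(x) ⬝ (𝓕g)(x) dx = 0`. -/
theorem fejer_convolution_band_limited (h : ℝ → ℝ) (hc : Continuous h)
    (hb : ∀ x, |h x| ≤ 1) (n : ℕ) (hn : 0 < n)
    (g : SchwartzMap ℝ ℂ) (hg : ∀ ξ ∈ Set.Icc (-(n : ℝ)) (n : ℝ), g ξ = 0) :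
    ∫ x : ℝ, ((∫ t : ℝ, h (x - t) * fejer n t : ℝ) : ℂ) * ftransform g x = 0 := by
  have hconv (x : ℝ) : ((∫ t, h (x - t) * fejer n t : ℝ) : ℂ) =
      ∫ t, (h (x - t) : ℂ) * fejer n t := by
    rw [← integral_complex_ofReal]
    push_cast
    rfl
  simp_rw [hconv, ftransform_eq_fourier]
  refine (integral_convolution_mul_eq_integral_mul_integral_comp_sub (h := fun x ↦ (h x : ℂ))
    (Complex.measurable_ofReal.comp hc.measurable)
    (fun x ↦ by rw [Complex.norm_real, norm_eq_abs]; exact hb x)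
    (integrable_fejer hn).ofReal (𝓕 g).integrable).trans ?_
  simp [integral_fejer_sub_mul_fourier_eq_zero hn g hg]
end
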